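/- For γ ∈ (0,1) and integer d ≥ 5, the inverse of the regularized incomplete beta function value satisfies [I_{1-γ²}((d-1)/2, 1/2)]^{-1} ≥ γ √d · (1/(2(1-γ)))^((d-1)/2). -/

import Mathlib

/-!
On `[0, 1 - γ²]` the factor `(1 - t)^(-1/2)` is at most `γ⁻¹`, so the incomplete integral is at
most `(1 - γ²)^a / (γ a) ≤ (2 (1 - γ))^a / (γ a)`, where `a = (d - 1) / 2`. The complete integral
is `B(a, 1/2) = Γ(a) √π / Γ(a + 1/2)`, and log-convexity of `Γ` on `[a, a + 1]` gives
`Γ(a + 1/2) ≤ Γ(a) √a`; hence `a B(a, 1/2) ≥ √(π a) ≥ √d`.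
-/

/-- The incomplete beta function `B(x, a, b) = ∫₀ˣ t^(a-1) (1-t)^(b-1) dt`. -/
noncomputable def incBeta (x a b : ℝ) : ℝ :=
  ∫ t in (0:ℝ)..x, t ^ (a - 1) * (1 - t) ^ (b - 1)

/-- The regularized incomplete beta function `I_x(a,b) = B(x,a,b) / B(1,a,b)`. -/
noncomputable def regIncBeta (x a b : ℝ) : ℝ := incBeta x a b / incBeta 1 a b

open Real MeasureTheory ProbabilityTheory

theorem incBeta_one_eq_beta {a b : ℝ} (ha : 0 < a) (hb : 0 < b) :
    incBeta 1 a b = beta a b := by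
  rw [beta_eq_betaIntegralReal a b ha hb, Complex.betaIntegral, incBeta,
    intervalIntegral.integral_of_le zero_le_one, intervalIntegral.integral_of_le zero_le_one,
    ← RCLike.re_to_complex, ← integral_re]
  · refine setIntegral_congr_fun measurableSet_Ioc fun t ⟨ht0, ht1⟩ => ?_
    norm_cast
    rw [← Complex.ofReal_cpow ht0.le, ← Complex.ofReal_cpow (sub_nonneg.2 ht1)]
    norm_cast
  · exact (intervalIntegrable_iff_integrableOn_Ioc_of_le zero_le_one).1
      (Complex.betaIntegral_convergent (by simpa) (by simpa))

theorem Gamma_add_half_le_mul_sqrt {s : ℝ} (hs : 0 < s) :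
    Gamma (s + 1 / 2) ≤ Gamma s * √s := by
  have hconv := Gamma_mul_add_mul_le_rpow_Gamma_mul_rpow_Gamma hs (by linarith : 0 < s + 1)
    one_half_pos one_half_pos (add_halves 1)
  have hΓ := (Gamma_pos_of_pos hs).le
  rw [Gamma_add_one hs.ne', mul_rpow hs.le hΓ] at hconv
  simp only [← sqrt_eq_rpow] at hconv
  calc Gamma (s + 1 / 2) = Gamma (1 / 2 * s + 1 / 2 * (s + 1)) := by ring_nf
    _ ≤ √s * (√(Gamma s) * √(Gamma s)) := hconv.trans_eq (by ring)
    _ = Gamma s * √s := by rw [mul_self_sqrt hΓ, mul_comm]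

theorem sqrt_pi_mul_le_mul_beta_half {a : ℝ} (ha : 0 < a) :
    √(π * a) ≤ a * beta a (1 / 2) := by
  rw [beta, Gamma_one_half_eq, sqrt_mul pi_pos.le, mul_div_assoc',
    le_div_iff₀ (Gamma_pos_of_pos (by linarith))]
  calc √π * √a * Gamma (a + 1 / 2) ≤ √π * √a * (Gamma a * √a) := by
        gcongr; exact Gamma_add_half_le_mul_sqrt ha
    _ = a * (Gamma a * √π) := by
        rw [show √π * √a * (Gamma a * √a) = √a * √a * (Gamma a * √π) by ring,
          mul_self_sqrt ha.le]

theorem incBeta_le_of_le_one {x a b : ℝ} (ha : 0 < a) (hb : b ≤ 1) (hx0 : 0 ≤ x) (hx1 : x < 1) :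
    incBeta x a b ≤ (1 - x) ^ (b - 1) * x ^ a / a := by
  have hpow : IntervalIntegrable (fun t : ℝ => t ^ (a - 1)) volume 0 x :=
    intervalIntegral.intervalIntegrable_rpow' (by linarith)
  have hf : IntervalIntegrable (fun t : ℝ => t ^ (a - 1) * (1 - t) ^ (b - 1)) volume 0 x := by
    refine hpow.mul_continuousOn (ContinuousOn.rpow_const (by fun_prop) fun t ht => Or.inl ?_)
    rw [Set.uIcc_of_le hx0] at ht
    linarith [ht.2]
  calc incBeta x a b ≤ ∫ t in (0:ℝ)..x, t ^ (a - 1) * (1 - x) ^ (b - 1) := by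
        refine intervalIntegral.integral_mono_on hx0 hf (hpow.mul_const _) fun t ht => ?_
        exact mul_le_mul_of_nonneg_left
          (rpow_le_rpow_of_nonpos (by linarith) (by linarith [ht.2]) (by linarith))
          (rpow_nonneg ht.1 _)
    _ = (1 - x) ^ (b - 1) * x ^ a / a := by
        rw [intervalIntegral.integral_mul_const, integral_rpow (Or.inl (by linarith)),
          zero_rpow (by linarith), sub_add_cancel]
        ring

theorem regIncBeta_le_of_le_one {x a b : ℝ} (ha : 0 < a) (hb0 : 0 < b) (hb1 : b ≤ 1)
    (hx0 : 0 ≤ x) (hx1 : x < 1) :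
    regIncBeta x a b ≤ (1 - x) ^ (b - 1) * x ^ a / (a * beta a b) := by
  rw [regIncBeta, incBeta_one_eq_beta ha hb0, ← div_div]
  exact div_le_div_of_nonneg_right (incBeta_le_of_le_one ha hb1 hx0 hx1)
    (beta_pos ha hb0).le

/-- For `γ ∈ (0,1)` and `d ≥ 5`:
`I_{1-γ²}((d-1)/2, 1/2) ≤ (γ √d (1/(2(1-γ)))^((d-1)/2))⁻¹`. -/
theorem regIncBeta_inv_lower_bound (γ : ℝ) (hγ : γ ∈ Set.Ioo (0:ℝ) 1) (d : ℕ) (hd : 5 ≤ d) :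
    regIncBeta (1 - γ ^ 2) (((d:ℝ) - 1) / 2) (1 / 2) ≤
      (γ * Real.sqrt d * (1 / (2 * (1 - γ))) ^ (((d:ℝ) - 1) / 2))⁻¹ := by
  obtain ⟨hγ0, hγ1⟩ := hγ
  set a : ℝ := ((d:ℝ) - 1) / 2 with ha_def
  have ha : 1 ≤ a := by
    have : (5:ℝ) ≤ d := by exact_mod_cast hd
    linarith
  have hγinv : (1 - (1 - γ ^ 2)) ^ ((1:ℝ) / 2 - 1) = γ⁻¹ := by
    rw [sub_sub_cancel, ← rpow_natCast, ← rpow_mul hγ0.le, ← rpow_neg_one]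
    norm_num
  have hsqrt_d : √d ≤ a * beta a (1 / 2) := by
    refine le_trans (sqrt_le_sqrt ?_) (sqrt_pi_mul_le_mul_beta_half (by linarith))
    nlinarith [pi_gt_three]
  have hbase : (1 - γ ^ 2) ^ a ≤ (2 * (1 - γ)) ^ a :=
    rpow_le_rpow (by nlinarith) (by nlinarith) (by linarith)
  calc regIncBeta (1 - γ ^ 2) a (1 / 2)
      ≤ γ⁻¹ * (1 - γ ^ 2) ^ a / (a * beta a (1 / 2)) := by
        rw [← hγinv]
        exact regIncBeta_le_of_le_one (by linarith) (by norm_num) (by norm_num) (by nlinarith)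
          (by nlinarith)
    _ ≤ γ⁻¹ * (2 * (1 - γ)) ^ a / √d := by
        gcongr
    _ = (γ * √d * (1 / (2 * (1 - γ))) ^ a)⁻¹ := by
        rw [one_div, inv_rpow (by linarith)]
        field_simp
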